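/- arXiv:2407.04124 — 3 statements merged into one kernel-verified Lean document; each statement's English description precedes it below -/
import Mathlib

section
/- Let $\mu$ be a regular positive Borel measure on $(0,\infty)$ with $\int_0^\infty 2^{-t}\,d\mu(t) < \infty$. If there is $D > 0$ such that $\widehat{\mu}(\ln n) \le D/\ln n$ for all integers $n \ge 2$, then the Helson matrix $H_\mu = (\widehat{\mu}(\ln(mn))/\sqrt{mn})_{m,n\ge 2}$ defines a bounded operator on $\ell^2(\mathbb N_2)$ with $\|H_\mu\| \le D\pi$. -/
open MeasureTheory

abbrev N2 := {n : ℕ // 2 ≤ n}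
noncomputable abbrev H2 := lp (fun _ : N2 => ℂ) 2

/-- The Laplace transform of a positive Borel measure on `(0,∞)`. -/
noncomputable def lap (μ : Measure ℝ) (s : ℝ) : ℝ :=
  (∫⁻ t in Set.Ioi (0:ℝ), ENNReal.ofReal (Real.exp (-s * t)) ∂μ).toReal

/-- The `(m,n)` entry of the Helson matrix `H_μ`, namely `μ̂(ln(mn))/√(mn)`. -/
noncomputable def helsonEntry (μ : Measure ℝ) (m n : N2) : ℂ :=
  (lap μ (Real.log ((m : ℝ) * (n : ℝ))) / Real.sqrt ((m : ℝ) * (n : ℝ)) : ℝ)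

noncomputable def e2 (m : N2) : H2 := lp.single 2 m 1

/-!
Schur test with the weight `w n = (√n √(log n))⁻¹`. The hypothesis gives
`|H(m,n)| ≤ D / (√(mn) (log m + log n))`, so with `a = log m`
`∑ₙ |H(m,n)| w n ≤ D / √m · ∑ₙ (n √(log n) (a + log n))⁻¹`. The summand is decreasing in `n` and
is the derivative of `2/√a · arctan (√(log x) / √a)`, which stays below `π / √a`; hence
`∑ₙ |H(m,n)| w n ≤ Dπ w m`, and the same for columns by symmetry. Cauchy–Schwarz, splitting
`|H(m,n)| xₙ = √(|H(m,n)| wₙ) · √(|H(m,n)| / wₙ) xₙ`, turns these row and column bounds into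
`‖H x‖ ≤ Dπ ‖x‖`.
-/

open Real Finset
open scoped NNReal ENNReal

section ArctanSqrtLog

variable {a : ℝ}

theorem hasDerivAt_arctan_sqrt_log (ha : 0 < a) {x : ℝ} (hx : 1 < x) :
    HasDerivAt (fun y => 2 / √a * arctan (√(log y) / √a))
      (x * √(log x) * (a + log x))⁻¹ x := by
  have hlog : 0 < log x := log_pos hx
  refine ((((hasDerivAt_log (by positivity)).sqrt hlog.ne').div_const √a).arctan.const_mul
    (2 / √a)).congr_deriv ?_
  have : 0 < √a := sqrt_pos.2 ha
  have : 0 < √(log x) := sqrt_pos.2 hlog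
  field_simp
  rw [sq_sqrt hlog.le, sq_sqrt ha.le]

theorem antitoneOn_inv_mul_sqrt_log (ha : 0 ≤ a) :
    AntitoneOn (fun x => (x * √(log x) * (a + log x))⁻¹) (Set.Ioi 1) := by
  intro x hx y hy hxy
  have hlog : 0 < log x := log_pos hx
  have hlog_le : log x ≤ log y := log_le_log (by linarith [Set.mem_Ioi.1 hx]) hxy
  have hx0 : 0 < x := by linarith [Set.mem_Ioi.1 hx]
  have hy0 : 0 < y := hx0.trans_le hxy
  refine inv_anti₀ (by have := sqrt_pos.2 hlog; positivity) (mul_le_mul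
    (mul_le_mul hxy (sqrt_le_sqrt hlog_le) (sqrt_nonneg _) hy0.le) (by linarith) (by linarith)
    (by positivity))

theorem inv_mul_sqrt_log_le_sub (ha : 0 < a) {x : ℝ} (hx : 1 ≤ x) :
    ((x + 1) * √(log (x + 1)) * (a + log (x + 1)))⁻¹ ≤
      2 / √a * arctan (√(log (x + 1)) / √a) - 2 / √a * arctan (√(log x) / √a) := by
  obtain ⟨c, hc, hslope⟩ := exists_hasDerivAt_eq_slope
    (fun y => 2 / √a * arctan (√(log y) / √a)) (fun y => (y * √(log y) * (a + log y))⁻¹)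
    (lt_add_one x)
    (fun y hy => (continuousAt_const.mul (continuousAt_arctan.comp
      ((continuousAt_log (by linarith [hy.1])).sqrt.div_const _))).continuousWithinAt)
    (fun y hy => hasDerivAt_arctan_sqrt_log ha (hx.trans_lt hy.1))
  rw [add_sub_cancel_left, div_one] at hslope
  rw [← hslope]
  exact antitoneOn_inv_mul_sqrt_log ha.le (hx.trans_lt hc.1) (by simp; linarith) hc.2.le

theorem sum_inv_mul_sqrt_log_le (ha : 0 < a) (s : Finset ℕ) (hs : ∀ n ∈ s, 2 ≤ n) :
    ∑ n ∈ s, ((n : ℝ) * √(log n) * (a + log n))⁻¹ ≤ π / √a := by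
  have telescope : ∀ M : ℕ, 1 ≤ M →
      ∑ n ∈ Icc 2 M, ((n : ℝ) * √(log n) * (a + log n))⁻¹ ≤ 2 / √a * arctan (√(log M) / √a) := by
    intro M hM
    induction M, hM using Nat.le_induction with
    | base => simp
    | succ M hM ih =>
      rw [sum_Icc_succ_top (by omega)]
      have := inv_mul_sqrt_log_le_sub ha (x := M) (by exact_mod_cast hM)
      push_cast
      linarith
  have hsub : s ⊆ Icc 2 (max 1 (s.sup id)) := fun n hn =>
    mem_Icc.2 ⟨hs n hn, le_max_of_le_right (le_sup (f := id) hn)⟩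
  calc ∑ n ∈ s, ((n : ℝ) * √(log n) * (a + log n))⁻¹
      ≤ ∑ n ∈ Icc 2 (max 1 (s.sup id)), ((n : ℝ) * √(log n) * (a + log n))⁻¹ :=
        sum_le_sum_of_subset_of_nonneg hsub fun n _ _ => by
          have : 0 ≤ a + log n := by have := log_natCast_nonneg n; linarith
          positivity
    _ ≤ 2 / √a * arctan (√(log (max 1 (s.sup id) : ℕ)) / √a) := telescope _ (le_max_left _ _)
    _ ≤ 2 / √a * (π / 2) := by gcongr; exact (arctan_lt_pi_div_two _).le
    _ = π / √a := by ring

end ArctanSqrtLog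

theorem ENNReal.sq_tsum_le_tsum_mul_tsum_of_sq_le_mul {ι : Type*} {r f g : ι → ℝ≥0}
    (h : ∀ i, r i ^ 2 ≤ f i * g i) :
    (∑' i, (r i : ℝ≥0∞)) ^ 2 ≤ (∑' i, (f i : ℝ≥0∞)) * ∑' i, (g i : ℝ≥0∞) := by
  rw [ENNReal.tsum_eq_iSup_sum, ENNReal.iSup_pow]
  refine iSup_le fun s => ?_
  calc (∑ i ∈ s, (r i : ℝ≥0∞)) ^ 2 ≤ (∑ i ∈ s, (f i : ℝ≥0∞)) * ∑ i ∈ s, (g i : ℝ≥0∞) := by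
        exact_mod_cast sum_sq_le_sum_mul_sum_of_sq_le_mul s (fun _ _ => zero_le)
          (fun _ _ => zero_le) fun i _ => h i
    _ ≤ _ := mul_le_mul' (ENNReal.sum_le_tsum s) (ENNReal.sum_le_tsum s)

section lpTwo

variable {ι : Type*} {E : ι → Type*} [∀ i, NormedAddCommGroup (E i)]

theorem lp.tsum_enorm_sq (x : lp E 2) : ∑' i, ‖x i‖ₑ ^ 2 = ‖x‖ₑ ^ 2 := by
  have hsum : ‖x‖ ^ 2 = ∑' i, ‖x i‖ ^ 2 := by
    simpa using lp.norm_rpow_eq_tsum (p := 2) (by norm_num) x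
  have hs : Summable fun i => ‖x i‖ ^ 2 := by
    simpa using (lp.memℓp x).summable (p := 2) (by norm_num)
  rw [← ofReal_norm, ← ENNReal.ofReal_pow (norm_nonneg _), hsum,
    ENNReal.ofReal_tsum_of_nonneg (fun i => by positivity) hs]
  simp_rw [ENNReal.ofReal_pow (norm_nonneg _), ofReal_norm]

theorem memℓp_two_of_tsum_enorm_sq_ne_top {f : ∀ i, E i} (hf : ∑' i, ‖f i‖ₑ ^ 2 ≠ ⊤) :
    Memℓp f 2 :=
  memℓp_gen <| by simpa [ENNReal.toReal_pow] using ENNReal.summable_toReal hf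

theorem lp.norm_le_of_tsum_enorm_sq_le (x : lp E 2) {c : ℝ≥0}
    (h : ∑' i, ‖x i‖ₑ ^ 2 ≤ (c : ℝ≥0∞) ^ 2) : ‖x‖ ≤ c := by
  rw [lp.tsum_enorm_sq, ENNReal.pow_le_pow_left_iff two_ne_zero, enorm_le_coe] at h
  exact_mod_cast h

end lpTwo

structure IsSchurWeight {ι : Type*} (K : ι → ι → ℝ≥0) (p : ι → ℝ≥0) (C : ℝ≥0) : Prop where
  ne_zero : ∀ i, p i ≠ 0
  tsum_row_le : ∀ i, ∑' j, (K i j * p j : ℝ≥0∞) ≤ C * p i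
  tsum_col_le : ∀ j, ∑' i, (K i j * p i : ℝ≥0∞) ≤ C * p j

namespace IsSchurWeight

section

variable {ι : Type*} {K : ι → ι → ℝ≥0} {p : ι → ℝ≥0} {C : ℝ≥0}

theorem sq_tsum_le (h : IsSchurWeight K p C) (a : ι → ℝ≥0) (i : ι) :
    (∑' j, (K i j * a j : ℝ≥0∞)) ^ 2 ≤
      C * p i * ∑' j, (K i j : ℝ≥0∞) * ((a j ^ 2 / p j : ℝ≥0) : ℝ≥0∞) := by
  have hCS := ENNReal.sq_tsum_le_tsum_mul_tsum_of_sq_le_mul (r := fun j => K i j * a j)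
    (f := fun j => K i j * p j) (g := fun j => K i j * (a j ^ 2 / p j)) fun j => by
      rw [mul_mul_mul_comm, mul_div_cancel₀ _ (h.ne_zero j), mul_pow, sq]
  simp only [ENNReal.coe_mul] at hCS
  exact hCS.trans (mul_le_mul_left (h.tsum_row_le i) _)

theorem tsum_sq_tsum_le (h : IsSchurWeight K p C) (a : ι → ℝ≥0) :
    ∑' i, (∑' j, (K i j * a j : ℝ≥0∞)) ^ 2 ≤ C ^ 2 * ∑' j, (a j : ℝ≥0∞) ^ 2 := by
  set q : ι → ℝ≥0∞ := fun j => ((a j ^ 2 / p j : ℝ≥0) : ℝ≥0∞)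
  have hq : ∀ j, p j * q j = a j ^ 2 := fun j => by
    simp only [q, ← ENNReal.coe_mul, mul_div_cancel₀ _ (h.ne_zero j), ENNReal.coe_pow]
  calc ∑' i, (∑' j, (K i j * a j : ℝ≥0∞)) ^ 2
      ≤ ∑' i, C * p i * ∑' j, K i j * q j := ENNReal.tsum_le_tsum (h.sq_tsum_le a)
    _ = C * ∑' j, (∑' i, (K i j * p i : ℝ≥0∞)) * q j := by
        simp_rw [← ENNReal.tsum_mul_left, ← ENNReal.tsum_mul_right]
        rw [ENNReal.tsum_comm]
        refine tsum_congr fun j => ?_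
        rw [← ENNReal.tsum_mul_left]
        exact tsum_congr fun i => by ring
    _ ≤ C * ∑' j, C * p j * q j := by
        gcongr with j
        exact h.tsum_col_le j
    _ = C ^ 2 * ∑' j, (a j : ℝ≥0∞) ^ 2 := by
        simp_rw [mul_assoc, hq, ENNReal.tsum_mul_left, ← mul_assoc, sq]

end

variable {ι 𝕜 : Type*} [RCLike 𝕜] {K : ι → ι → 𝕜} {p : ι → ℝ≥0} {C : ℝ≥0}

theorem tsum_sq_tsum_enorm_mul_le (h : IsSchurWeight (fun i j => ‖K i j‖₊) p C)
    (x : lp (fun _ : ι => 𝕜) 2) :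
    ∑' i, (∑' j, ‖K i j * x j‖ₑ) ^ 2 ≤ (C * ‖x‖ₑ) ^ 2 := by
  calc ∑' i, (∑' j, ‖K i j * x j‖ₑ) ^ 2
      = ∑' i, (∑' j, (‖K i j‖₊ * ‖x j‖₊ : ℝ≥0∞)) ^ 2 := by simp only [enorm_mul]; rfl
    _ ≤ C ^ 2 * ∑' j, (‖x j‖₊ : ℝ≥0∞) ^ 2 := h.tsum_sq_tsum_le _
    _ = (C * ‖x‖ₑ) ^ 2 := by rw [mul_pow, ← lp.tsum_enorm_sq]; rfl

theorem summable_mul (h : IsSchurWeight (fun i j => ‖K i j‖₊) p C)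
    (x : lp (fun _ : ι => 𝕜) 2) (i : ι) : Summable fun j => K i j * x j := by
  refine Summable.of_enorm fun htop => ?_
  have := (ENNReal.le_tsum i).trans (h.tsum_sq_tsum_enorm_mul_le x)
  rw [htop] at this
  exact ENNReal.mul_ne_top ENNReal.coe_ne_top enorm_ne_top (by simpa using this)

theorem tsum_enorm_tsum_mul_sq_le (h : IsSchurWeight (fun i j => ‖K i j‖₊) p C)
    (x : lp (fun _ : ι => 𝕜) 2) :
    ∑' i, ‖∑' j, K i j * x j‖ₑ ^ 2 ≤ (C * ‖x‖ₑ) ^ 2 :=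
  (ENNReal.tsum_le_tsum fun _ => pow_le_pow_left' enorm_tsum_le_tsum_enorm 2).trans
    (h.tsum_sq_tsum_enorm_mul_le x)

theorem exists_continuousLinearMap (h : IsSchurWeight (fun i j => ‖K i j‖₊) p C) :
    ∃ T : lp (fun _ : ι => 𝕜) 2 →L[𝕜] lp (fun _ : ι => 𝕜) 2,
      (∀ x i, T x i = ∑' j, K i j * x j) ∧ ‖T‖ ≤ C := by
  have hmem (x : lp (fun _ : ι => 𝕜) 2) : Memℓp (fun i => ∑' j, K i j * x j) 2 :=
    memℓp_two_of_tsum_enorm_sq_ne_top <| ne_top_of_le_ne_top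
      (by simp [ENNReal.mul_eq_top]) (h.tsum_enorm_tsum_mul_sq_le x)
  let L : lp (fun _ : ι => 𝕜) 2 →ₗ[𝕜] lp (fun _ : ι => 𝕜) 2 :=
    { toFun x := ⟨_, hmem x⟩
      map_add' x y := lp.ext <| funext fun i => by
        simp only [lp.coeFn_add, Pi.add_apply, mul_add]
        exact (h.summable_mul x i).tsum_add (h.summable_mul y i)
      map_smul' c x := lp.ext <| funext fun i => by
        simp only [lp.coeFn_smul, Pi.smul_apply, smul_eq_mul, RingHom.id_apply, mul_left_comm]
        exact tsum_mul_left }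
  refine ⟨L.mkContinuous C fun x => ?_, fun x i => rfl, L.mkContinuous_norm_le C.2 _⟩
  exact lp.norm_le_of_tsum_enorm_sq_le (c := C * ‖x‖₊) (L x) (h.tsum_enorm_tsum_mul_sq_le x)

end IsSchurWeight

section Helson

theorem lap_nonneg (μ : Measure ℝ) (s : ℝ) : 0 ≤ lap μ s := ENNReal.toReal_nonneg

theorem helsonEntry_comm (μ : Measure ℝ) (m n : N2) : helsonEntry μ m n = helsonEntry μ n m := by
  rw [helsonEntry, helsonEntry, mul_comm]

noncomputable def helsonWeight (n : N2) : ℝ := (√n * √(log n))⁻¹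

theorem N2.one_lt_coe (n : N2) : (1 : ℝ) < n := by exact_mod_cast n.2

theorem helsonWeight_pos (n : N2) : 0 < helsonWeight n := by
  have := sqrt_pos.2 (log_pos (N2.one_lt_coe n))
  have := N2.one_lt_coe n
  unfold helsonWeight
  positivity

variable {μ : Measure ℝ} {D : ℝ}

theorem lap_log_mul_le (hupper : ∀ n : N2, lap μ (log n) ≤ D / log n) (m n : N2) :
    lap μ (log ((m : ℝ) * n)) ≤ D / (log m + log n) := by
  have := hupper ⟨m * n, le_mul_of_one_le_of_le (by omega) n.2⟩
  push_cast at this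
  rwa [← log_mul (by linarith [N2.one_lt_coe m]) (by linarith [N2.one_lt_coe n])]

theorem norm_helsonEntry_mul_helsonWeight_le (hupper : ∀ n : N2, lap μ (log n) ≤ D / log n)
    (m n : N2) :
    ‖helsonEntry μ m n‖ * helsonWeight n ≤
      D / √m * ((n : ℝ) * √(log n) * (log m + log n))⁻¹ := by
  have hm := N2.one_lt_coe m
  have hn := N2.one_lt_coe n
  have hlm := log_pos hm
  have hln := log_pos hn
  have : 0 < √(log n) := sqrt_pos.2 hln
  rw [helsonEntry, Complex.norm_real, norm_of_nonneg (div_nonneg (lap_nonneg _ _) (sqrt_nonneg _)),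
    sqrt_mul (by linarith)]
  calc lap μ (log ((m : ℝ) * n)) / (√m * √n) * helsonWeight n
      ≤ D / (log m + log n) / (√m * √n) * helsonWeight n := by
        gcongr
        · exact (helsonWeight_pos n).le
        · exact lap_log_mul_le hupper m n
    _ = D / √m * ((n : ℝ) * √(log n) * (log m + log n))⁻¹ := by
        have : 0 < √(n : ℝ) := sqrt_pos.2 (by linarith)
        have : 0 < √(m : ℝ) := sqrt_pos.2 (by linarith)
        rw [helsonWeight]
        field_simp
        rw [sq_sqrt (by linarith)]

theorem sum_norm_helsonEntry_mul_helsonWeight_le (hD : 0 ≤ D)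
    (hupper : ∀ n : N2, lap μ (log n) ≤ D / log n) (m : N2) (s : Finset N2) :
    ∑ n ∈ s, ‖helsonEntry μ m n‖ * helsonWeight n ≤ D * π * helsonWeight m := by
  have hlm := log_pos (N2.one_lt_coe m)
  calc ∑ n ∈ s, ‖helsonEntry μ m n‖ * helsonWeight n
      ≤ D / √m * ∑ n ∈ s.map (.subtype _), ((n : ℝ) * √(log n) * (log m + log n))⁻¹ := by
        rw [sum_map, mul_sum]
        exact sum_le_sum fun n _ => norm_helsonEntry_mul_helsonWeight_le hupper m n
    _ ≤ D / √m * (π / √(log m)) := by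
        gcongr
        refine sum_inv_mul_sqrt_log_le hlm _ fun n hn => ?_
        obtain ⟨n, -, rfl⟩ := mem_map.1 hn
        exact n.2
    _ = D * π * helsonWeight m := by
        rw [helsonWeight]
        ring

theorem isSchurWeight_helson (hD : 0 ≤ D) (hupper : ∀ n : N2, lap μ (log n) ≤ D / log n) :
    IsSchurWeight (fun m n => ‖helsonEntry μ m n‖₊) (fun n => (helsonWeight n).toNNReal)
      (D * π).toNNReal := by
  have row (m : N2) : ∑' n, (‖helsonEntry μ m n‖₊ * (helsonWeight n).toNNReal : ℝ≥0∞) ≤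
      (D * π).toNNReal * (helsonWeight m).toNNReal := by
    refine ENNReal.summable.tsum_le_of_sum_le fun s => ?_
    have : ∑ n ∈ s, ‖helsonEntry μ m n‖₊ * (helsonWeight n).toNNReal ≤
        (D * π).toNNReal * (helsonWeight m).toNNReal := by
      rw [← NNReal.coe_le_coe]
      push_cast [Real.coe_toNNReal _ (helsonWeight_pos _).le,
        Real.coe_toNNReal _ (mul_nonneg hD pi_pos.le)]
      exact sum_norm_helsonEntry_mul_helsonWeight_le hD hupper m s
    exact_mod_cast this
  refine ⟨fun n => by simpa using helsonWeight_pos n, row, fun n => ?_⟩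
  simpa only [helsonEntry_comm μ _ n] using row n

end Helson

theorem helson_bounded_of_upper_general (μ : Measure ℝ)
    (D : ℝ) (hD : 0 < D)
    (hupper : ∀ n : N2, lap μ (Real.log n) ≤ D / Real.log n) :
    ∃ T : H2 →L[ℂ] H2,
      (∀ m n : N2, T (e2 m) n = helsonEntry μ m n) ∧
      ‖T‖ ≤ D * Real.pi := by
  obtain ⟨T, hT, hnorm⟩ := (isSchurWeight_helson hD.le hupper).exists_continuousLinearMap
  refine ⟨T, fun m n => ?_, ?_⟩
  · simp [hT, e2, lp.single_apply, Pi.single_apply, helsonEntry_comm μ m n]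
  · rwa [Real.coe_toNNReal _ (by positivity)] at hnorm

/-- If `μ̂(ln n) ≤ D/ln n` for all `n ≥ 2`, then the Helson matrix `H_μ` defines a bounded
operator on `ℓ²(ℕ₂)` with norm at most `Dπ`. -/
theorem helson_bounded_of_upper (μ : Measure ℝ)
    (hμ : (∫⁻ t in Set.Ioi (0:ℝ), ENNReal.ofReal ((2:ℝ) ^ (-t)) ∂μ) < ⊤)
    (D : ℝ) (hD : 0 < D)
    (hupper : ∀ n : N2, lap μ (Real.log n) ≤ D / Real.log n) :
    ∃ T : H2 →L[ℂ] H2,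
      (∀ m n : N2, T (e2 m) n = helsonEntry μ m n) ∧
      ‖T‖ ≤ D * Real.pi :=
  helson_bounded_of_upper_general μ D hD hupper
end

section
/- Let $\mu$ be a regular positive Borel measure on $(0,\infty)$ with $\int_0^\infty 2^{-t}\,d\mu(t) < \infty$. If the sequence $\{(\ln n)\,\widehat{\mu}(\ln n)\}_{n\ge 2}$ is unbounded, then the Helson matrix $H_\mu$ does not define a bounded operator on $\ell^2(\mathbb N_2)$. -/
open MeasureTheory

/-!
Test the quadratic form of `H_μ` on `x_k = k^{-1/2}`, `2 ≤ k ≤ M = ⌊√N⌋`. Since `μ̂` is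
decreasing and every product `kj` is at most `N`, each entry is at least `μ̂(ln N)/√(kj)`, so
`⟨x, H_μ x⟩ ≥ S² μ̂(ln N)` with `S = ‖x‖² = ∑_{k ≤ M} 1/k ≥ ln N / 2 - 1`. Boundedness gives
`⟨x, H_μ x⟩ ≤ ‖H_μ‖ S`, hence `(ln N / 2 - 1) μ̂(ln N) ≤ ‖H_μ‖`, and `μ̂(ln N) ≤ μ̂(ln 2) < ∞`
then bounds `(ln N) μ̂(ln N)`.
-/

open Real

theorem quadratic_form_le_opNorm {ι : Type*} [DecidableEq ι]
    (T : lp (fun _ : ι => ℂ) 2 →L[ℂ] lp (fun _ : ι => ℂ) 2) {a : ι → ι → ℝ}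
    (hT : ∀ k j, T (lp.single 2 k 1) j = a k j) (F : Finset ι) (w : ι → ℝ) :
    ∑ k ∈ F, ∑ j ∈ F, w j * w k * a k j ≤ ‖T‖ * ∑ k ∈ F, w k ^ 2 := by
  set x : lp (fun _ : ι => ℂ) 2 := ∑ k ∈ F, lp.single 2 k (w k : ℂ)
  have hx : ‖x‖ ^ 2 = ∑ k ∈ F, w k ^ 2 := by
    simpa using lp.norm_sum_single (p := 2) (by norm_num) (fun k => (w k : ℂ)) F
  have hxTx : inner ℂ x (T x) = ((∑ k ∈ F, ∑ j ∈ F, w j * w k * a k j : ℝ) : ℂ) := by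
    have hsingle : ∀ k, (lp.single 2 k (w k : ℂ) : lp (fun _ : ι => ℂ) 2)
        = (w k : ℂ) • lp.single 2 k 1 := by
      intro k; rw [← lp.single_smul, smul_eq_mul, mul_one]
    simp [x, lp.inner_single_left, map_sum, hsingle, hT, mul_assoc]
  calc ∑ k ∈ F, ∑ j ∈ F, w j * w k * a k j = (inner ℂ x (T x)).re := by simp [hxTx]
    _ ≤ ‖inner ℂ x (T x)‖ := Complex.re_le_norm _
    _ ≤ ‖x‖ * (‖T‖ * ‖x‖) := (norm_inner_le_norm _ _).trans (by gcongr; exact T.le_opNorm x)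
    _ = ‖T‖ * ∑ k ∈ F, w k ^ 2 := by rw [← hx]; ring

theorem log_add_one_sub_one_le_sum_Ioc_inv (M : ℕ) :
    log (M + 1) - 1 ≤ ∑ k ∈ Finset.Ioc 1 M, (k : ℝ)⁻¹ := by
  rcases Nat.eq_zero_or_pos M with rfl | hM
  · simp
  have h := log_add_one_le_harmonic M
  rw [harmonic_eq_sum_Icc, ← Finset.add_sum_Ioc_eq_sum_Icc hM] at h
  push_cast at h
  linarith

theorem log_le_two_mul_log_sqrt_add_one (N : ℕ) :
    log N ≤ 2 * log (Nat.sqrt N + 1) := by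
  rcases Nat.eq_zero_or_pos N with rfl | hN
  · simp
  calc log N ≤ log ((Nat.sqrt N + 1 : ℝ) ^ 2) :=
        log_le_log (by positivity) (by exact_mod_cast (Nat.lt_succ_sqrt' N).le)
    _ = 2 * log (Nat.sqrt N + 1) := by rw [log_pow]; norm_num

theorem lintegral_exp_antitone (μ : Measure ℝ) :
    Antitone fun s : ℝ => ∫⁻ t in Set.Ioi 0, ENNReal.ofReal (exp (-s * t)) ∂μ := by
  intro s s' hss
  refine setLIntegral_mono (by fun_prop) fun t ht => ?_
  gcongr
  nlinarith [ht.out]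

theorem lap_antitoneOn (μ : Measure ℝ) {s₀ : ℝ}
    (hfin : ∫⁻ t in Set.Ioi 0, ENNReal.ofReal (exp (-s₀ * t)) ∂μ ≠ ⊤) :
    AntitoneOn (lap μ) (Set.Ici s₀) := fun _ hs _ _ hss =>
  ENNReal.toReal_mono (ne_top_of_le_ne_top hfin (lintegral_exp_antitone μ hs))
    (lintegral_exp_antitone μ hss)

theorem inv_mul_inv_mul_lap_le_of_mul_le (μ : Measure ℝ)
    (hanti : AntitoneOn (lap μ) (Set.Ici (log 2))) {k j : N2} {N : ℕ}
    (hkj : (k : ℕ) * (j : ℕ) ≤ N) :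
    ((k : ℕ) : ℝ)⁻¹ * ((j : ℕ) : ℝ)⁻¹ * lap μ (log N) ≤
      (√(j : ℕ))⁻¹ * (√(k : ℕ))⁻¹ *
        (lap μ (log ((k : ℝ) * j)) / √((k : ℝ) * j)) := by
  have hK : (2 : ℝ) ≤ (k : ℕ) := by exact_mod_cast k.2
  have hJ : (2 : ℝ) ≤ (j : ℕ) := by exact_mod_cast j.2
  have hkjN : ((k : ℕ) : ℝ) * (j : ℕ) ≤ N := by exact_mod_cast hkj
  have hlog2 : log 2 ≤ log ((k : ℕ) * (j : ℕ)) :=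
    log_le_log (by norm_num) (by nlinarith)
  calc ((k : ℕ) : ℝ)⁻¹ * ((j : ℕ) : ℝ)⁻¹ * lap μ (log N)
      ≤ ((k : ℕ) : ℝ)⁻¹ * ((j : ℕ) : ℝ)⁻¹ * lap μ (log ((k : ℕ) * (j : ℕ))) := by
        have hlogN := log_le_log (by positivity) hkjN
        gcongr
        exact hanti hlog2 (hlog2.trans hlogN) hlogN
    _ = _ := by
        rw [sqrt_mul (by positivity)]
        field_simp
        rw [sq_sqrt (by positivity), sq_sqrt (by positivity)]
        ring

theorem sum_inv_mul_lap_le_opNorm (μ : Measure ℝ)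
    (hanti : AntitoneOn (lap μ) (Set.Ici (log 2)))
    (T : H2 →L[ℂ] H2) (hT : ∀ m n : N2, T (e2 m) n = helsonEntry μ m n)
    {M N : ℕ} (hMN : M * M ≤ N) :
    (∑ k ∈ Finset.Ioc 1 M, (k : ℝ)⁻¹) * lap μ (log N) ≤ ‖T‖ := by
  set F : Finset N2 := (Finset.Ioc 1 M).subtype (2 ≤ ·)
  have hS : ∑ k ∈ Finset.Ioc 1 M, (k : ℝ)⁻¹ = ∑ k ∈ F, ((k : ℕ) : ℝ)⁻¹ :=
    (Finset.sum_subtype_of_mem (fun k : ℕ => (k : ℝ)⁻¹)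
      fun k hk => (Finset.mem_Ioc.1 hk).1).symm
  have hle : ∀ k ∈ F, (k : ℕ) ≤ M := fun k hk => (Finset.mem_Ioc.1 (Finset.mem_subtype.1 hk)).2
  have hquad := quadratic_form_le_opNorm T
    (a := fun m n : N2 => lap μ (log ((m : ℝ) * n)) / √((m : ℝ) * n)) hT F
    (fun k => (√(k : ℕ))⁻¹)
  have hw : ∀ k : N2, (√(k : ℕ))⁻¹ ^ 2 = ((k : ℕ) : ℝ)⁻¹ := fun k => by
    rw [inv_pow, sq_sqrt (by positivity)]
  rw [hS]
  set S := ∑ k ∈ F, ((k : ℕ) : ℝ)⁻¹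
  have hSL : S * S * lap μ (log N) ≤ ‖T‖ * S := calc
    S * S * lap μ (log N)
      = ∑ k ∈ F, ∑ j ∈ F, ((k : ℕ) : ℝ)⁻¹ * ((j : ℕ) : ℝ)⁻¹ * lap μ (log N) := by
        rw [Finset.sum_mul_sum, Finset.sum_mul]
        simp_rw [Finset.sum_mul]
    _ ≤ _ := Finset.sum_le_sum fun k hk => Finset.sum_le_sum fun j hj =>
        inv_mul_inv_mul_lap_le_of_mul_le μ hanti ((Nat.mul_le_mul (hle k hk) (hle j hj)).trans hMN)
    _ ≤ _ := hquad
    _ = ‖T‖ * S := by simp only [hw, S]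
  have hS0 : 0 ≤ S := Finset.sum_nonneg fun k _ => by positivity
  rcases hS0.eq_or_lt with hS0 | hS0
  · rw [← hS0, zero_mul]
    exact norm_nonneg T
  · exact le_of_mul_le_mul_left (by linarith) hS0

/-- If `(ln n) μ̂(ln n)` is unbounded, then the Helson matrix `H_μ` does not define a bounded
operator on `ℓ²(ℕ₂)`. -/
theorem helson_unbounded (μ : Measure ℝ)
    (hμ : (∫⁻ t in Set.Ioi (0:ℝ), ENNReal.ofReal ((2:ℝ) ^ (-t)) ∂μ) < ⊤)
    (hunb : ∀ C : ℝ, ∃ n : N2, C < Real.log n * lap μ (Real.log n)) :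
    ¬ ∃ T : H2 →L[ℂ] H2, ∀ m n : N2, T (e2 m) n = helsonEntry μ m n := by
  rintro ⟨T, hT⟩
  have hfin : ∫⁻ t in Set.Ioi 0, ENNReal.ofReal (exp (-log 2 * t)) ∂μ ≠ ⊤ := by
    convert hμ.ne using 5 with t
    rw [rpow_def_of_pos two_pos]
    ring_nf
  have hanti := lap_antitoneOn μ hfin
  obtain ⟨n, hn⟩ := hunb (2 * ‖T‖ + 2 * lap μ (log 2))
  have hlog2 : log 2 ≤ log (n : ℕ) := log_le_log two_pos (by exact_mod_cast n.2)
  have hlap : lap μ (log (n : ℕ)) ≤ lap μ (log 2) :=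
    hanti Set.self_mem_Ici hlog2 hlog2
  have hlap0 : 0 ≤ lap μ (log (n : ℕ)) := ENNReal.toReal_nonneg
  have hS := sum_inv_mul_lap_le_opNorm μ hanti T hT (Nat.sqrt_le (n : ℕ))
  have hharm := log_add_one_sub_one_le_sum_Ioc_inv (Nat.sqrt n)
  have hsqrt := log_le_two_mul_log_sqrt_add_one n
  have hlogS : log (n : ℕ) ≤ 2 * (∑ k ∈ Finset.Ioc 1 (Nat.sqrt n), (k : ℝ)⁻¹ + 1) := by
    linarith
  linarith [mul_le_mul_of_nonneg_right hlogS hlap0]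
end

section
/- For $p > 0$, the Helson matrix with entries $\frac{\Gamma(p+1)}{\sqrt{mn}\,(\ln(mn))^{p+1}}$ for $m, n \ge 2$ (induced by the measure $t^p\,dt$) is a positive trace-class operator on $\ell^2(\mathbb N_2)$. -/
/-!
The matrix is the Gram matrix `⟪V n, V m⟫` of the vectors `V m = t^(p/2) m^(-1/2-t)` of
`L²(0, ∞)`, since `∫₀^∞ t^p (mn)^(-1/2-t) dt = Γ(p+1) / (√(mn) log(mn)^(p+1))`. So it is
`B† B` for the synthesis operator `B x = ∑ x m • V m`, hence positive, and its diagonal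
`∑ ‖V m‖² = ∑ Γ(p+1) / (m (2 log m)^(p+1))` converges by Cauchy condensation; the same
square summability makes `B` bounded.
-/

open MeasureTheory

open Real Set

namespace lp

variable {ι 𝕜 H : Type*} [RCLike 𝕜] [NormedAddCommGroup H]

/-- `x ↦ ∑' i, x i • V i`, bounded by Cauchy–Schwarz because `V` is square summable. -/
noncomputable def synthesis [NormedSpace 𝕜 H] [CompleteSpace H] (V : lp (fun _ : ι => H) 2) :
    lp (fun _ : ι => 𝕜) 2 →L[𝕜] H :=
  (dualPairing 2 2 (fun _ => ContinuousLinearMap.lsmul 𝕜 𝕜) (K := 1)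
    fun _ => ContinuousLinearMap.opNorm_lsmul_le.trans_eq NNReal.coe_one.symm).flip V

theorem synthesis_single [NormedSpace 𝕜 H] [CompleteSpace H] [DecidableEq ι]
    (V : lp (fun _ : ι => H) 2) (i : ι) :
    synthesis V (lp.single 2 i (1 : 𝕜)) = V i := by
  rw [synthesis, ContinuousLinearMap.flip_apply, dualPairing_apply, tsum_eq_single i]
  · simp
  · intro j hj
    simp [hj]

theorem adjoint_comp_self_single_apply [InnerProductSpace 𝕜 H] [CompleteSpace H] [DecidableEq ι]
    (S : lp (fun _ : ι => 𝕜) 2 →L[𝕜] H) (i j : ι) :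
    (S.adjoint ∘L S) (lp.single 2 i 1) j =
      inner 𝕜 (S (lp.single 2 j 1)) (S (lp.single 2 i 1)) := by
  rw [← ContinuousLinearMap.adjoint_inner_right, lp.inner_single_left]
  simp

end lp

/-- The paper's `t ↦ a^(-1/2-t)` in `L²(t^p dt)`, carried to `L²(0, ∞)` by `f ↦ t^(p/2) f`. -/
noncomputable def helsonKernel (p a : ℝ) : ℝ → ℝ :=
  (Ioi 0).indicator fun t => t ^ (p / 2) * a ^ (-(1 / 2) - t)

theorem helsonKernel_mul_helsonKernel (p : ℝ) {a b : ℝ} (ha : 0 < a) (hb : 0 < b) (t : ℝ) :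
    helsonKernel p a t * helsonKernel p b t =
      (Ioi 0).indicator (fun t => (√(a * b))⁻¹ *
        (t ^ ((p + 1) - 1) * exp (-(log (a * b) * t)))) t := by
  by_cases ht : t ∈ Ioi 0
  · have hab : 0 < a * b := mul_pos ha hb
    simp only [helsonKernel, indicator_of_mem ht]
    rw [mul_mul_mul_comm, ← rpow_add ht, ← mul_rpow ha.le hb.le, sub_eq_add_neg,
      rpow_add hab, sqrt_eq_rpow, ← rpow_neg hab.le, rpow_def_of_pos hab (-t)]
    ring_nf
  · simp [helsonKernel, indicator_of_notMem ht]

theorem integral_helsonKernel_mul_helsonKernel {p : ℝ} (hp : -1 < p) {a b : ℝ} (ha : 0 < a)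
    (hb : 0 < b) (hab : 1 < a * b) :
    ∫ t, helsonKernel p a t * helsonKernel p b t =
      Gamma (p + 1) / (√(a * b) * log (a * b) ^ (p + 1)) := by
  have hlog : 0 < log (a * b) := log_pos hab
  simp_rw [helsonKernel_mul_helsonKernel p ha hb]
  rw [integral_indicator measurableSet_Ioi, integral_const_mul,
    integral_rpow_mul_exp_neg_mul_Ioi (by linarith) hlog, one_div, inv_rpow hlog.le]
  field_simp

theorem integrable_helsonKernel_mul_helsonKernel {p : ℝ} (hp : -1 < p) {a b : ℝ} (ha : 0 < a)
    (hb : 0 < b) (hab : 1 < a * b) :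
    Integrable fun t => helsonKernel p a t * helsonKernel p b t := by
  -- a non-integrable function would have integral `0`
  refine Integrable.of_integral_ne_zero ?_
  rw [integral_helsonKernel_mul_helsonKernel hp ha hb hab]
  have := log_pos hab
  have := Gamma_pos_of_pos (show 0 < p + 1 by linarith)
  positivity

theorem measurable_helsonKernel (p a : ℝ) : Measurable (helsonKernel p a) :=
  (by fun_prop : Measurable fun t : ℝ => t ^ (p / 2) * a ^ (-(1 / 2) - t)).indicator
    measurableSet_Ioi

theorem memLp_helsonKernel {p : ℝ} (hp : -1 < p) {a : ℝ} (ha : 1 < a) :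
    MemLp (fun t => (helsonKernel p a t : ℂ)) 2 := by
  refine MemLp.ofReal <|
    (memLp_two_iff_integrable_sq (measurable_helsonKernel p a).aestronglyMeasurable).mpr ?_
  simpa only [sq] using integrable_helsonKernel_mul_helsonKernel hp (by linarith) (by linarith)
    (by nlinarith)

theorem MeasureTheory.L2.inner_toLp_ofReal {α : Type*} [MeasurableSpace α] {μ : Measure α}
    {f g : α → ℝ} (hf : MemLp (fun x => (f x : ℂ)) 2 μ) (hg : MemLp (fun x => (g x : ℂ)) 2 μ) :
    inner ℂ (hf.toLp _) (hg.toLp _) = ((∫ x, f x * g x ∂μ : ℝ) : ℂ) := by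
  rw [L2.inner_def, ← integral_complex_ofReal]
  refine integral_congr_ae ?_
  filter_upwards [hf.coeFn_toLp, hg.coeFn_toLp] with x hfx hgx
  simp [hfx, hgx, mul_comm]

/-- The terms at `n = 0, 1` are `1 / 0 = 0`. -/
theorem Real.summable_one_div_nat_mul_log_rpow {q : ℝ} (hq : 1 < q) :
    Summable fun n : ℕ => 1 / (n * log n ^ q) := by
  have hq0 : 0 < q := by linarith
  have hlog2 := log_pos one_lt_two
  refine (summable_condensed_iff_of_eventually_nonneg ?_ ?_).mp ?_
  · exact Filter.Eventually.of_forall fun n => by positivity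
  · filter_upwards [Filter.eventually_ge_atTop 2] with n hn
    have := log_pos (Nat.one_lt_cast.mpr hn)
    gcongr <;> omega
  · refine ((Real.summable_one_div_nat_rpow.mpr hq).mul_left (log 2 ^ q)⁻¹).congr fun k => ?_
    push_cast
    rw [log_pow, mul_rpow (Nat.cast_nonneg k) hlog2.le]
    rcases eq_or_ne k 0 with rfl | hk
    · simp [zero_rpow hq0.ne']
    · field_simp

theorem N2.one_lt (m : N2) : (1 : ℝ) < m := by exact_mod_cast m.2

noncomputable def helsonVector {p : ℝ} (hp : -1 < p) (m : N2) : Lp ℂ 2 (volume : Measure ℝ) :=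
  (memLp_helsonKernel hp (N2.one_lt m)).toLp _

theorem inner_helsonVector {p : ℝ} (hp : -1 < p) (m n : N2) :
    inner ℂ (helsonVector hp m) (helsonVector hp n) =
      ((Gamma (p + 1) / (√((m : ℝ) * n) * log ((m : ℝ) * n) ^ (p + 1)) : ℝ) : ℂ) := by
  have hm := N2.one_lt m
  have hn := N2.one_lt n
  rw [helsonVector, helsonVector, L2.inner_toLp_ofReal,
    integral_helsonKernel_mul_helsonKernel hp (by linarith) (by linarith) (by nlinarith)]

theorem summable_helson_diagonal {p : ℝ} (hp : 0 < p) :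
    Summable fun m : N2 => Gamma (p + 1) / (√((m : ℝ) * m) * log ((m : ℝ) * m) ^ (p + 1)) := by
  refine (((summable_one_div_nat_mul_log_rpow (by linarith : 1 < p + 1)).comp_injective
    Subtype.val_injective).mul_left (Gamma (p + 1) / 2 ^ (p + 1))).congr fun m => ?_
  have hm : (0 : ℝ) < m := by linarith [N2.one_lt m]
  have hlog := log_pos (N2.one_lt m)
  dsimp only [Function.comp_apply]
  rw [sqrt_mul_self hm.le, log_mul hm.ne' hm.ne', ← two_mul,
    mul_rpow zero_le_two hlog.le]
  field_simp

theorem memℓp_helsonVector {p : ℝ} (hp : 0 < p) :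
    Memℓp (helsonVector (neg_one_lt_zero.trans hp)) 2 := by
  refine memℓp_gen <| (summable_helson_diagonal hp).congr fun m => ?_
  rw [ENNReal.toReal_ofNat, rpow_two, ← inner_self_eq_norm_sq (𝕜 := ℂ), inner_helsonVector]
  exact (Complex.ofReal_re _).symm

/-- For `p > 0`, the Helson matrix with entries `Γ(p+1)/(√(mn)(ln(mn))^{p+1})` (induced by
the measure `t^p dt`) is a bounded positive operator on `ℓ²(ℕ₂)` which is trace class (for
a positive operator, trace class means that the diagonal entries in an orthonormal basis
are summable). -/
theorem helson_tpow_traceClass (p : ℝ) (hp : 0 < p) :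
    ∃ T : H2 →L[ℂ] H2,
      (∀ m n : N2, T (e2 m) n =
        ((Real.Gamma (p + 1) /
          (Real.sqrt ((m:ℝ) * (n:ℝ)) * Real.log ((m:ℝ) * (n:ℝ)) ^ (p + 1)) : ℝ) : ℂ)) ∧
      (∀ x : H2, 0 ≤ (inner ℂ x (T x) : ℂ).re) ∧
      Summable (fun m : N2 => (inner ℂ (e2 m) (T (e2 m)) : ℂ).re) := by
  set S := lp.synthesis (𝕜 := ℂ) ⟨_, memℓp_helsonVector hp⟩
  refine ⟨S.adjoint ∘L S, fun m n => ?_, S.isPositive_adjoint_comp_self.re_inner_nonneg_right,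
    ?_⟩
  · rw [e2, lp.adjoint_comp_self_single_apply, lp.synthesis_single, lp.synthesis_single]
    simp only [inner_helsonVector, mul_comm (n : ℝ)]
  · have hS : Summable fun m : N2 => ‖S (e2 m)‖ ^ 2 := by
      simpa [S, e2, lp.synthesis_single] using
        (lp.memℓp ⟨_, memℓp_helsonVector hp⟩).summable (by norm_num)
    exact hS.congr fun m => S.apply_norm_sq_eq_inner_adjoint_right _
end
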